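/- arXiv:1405.7190 — 3 statements merged into one kernel-verified Lean document; each statement's English description precedes it below -/
import Mathlib

section
/- Let n ≥ 2 be an integer and d a positive integer. Then there exist constants c_0 > 0 and c_1 > 0, depending only on n and d, such that: for all M ≥ 1 and all Δ > 0 with Δ ≤ c_0·M^{1 − 1/(2n)}, and every measurable function w : ℝ → ℝ with 0 ≤ w ≤ 1, w(x) = 0 for x outside [M, M+Δ], and w(x) = 1 for x ∈ [M + Δ/4, M + 3Δ/4], one has |∫_M^{M+Δ} w(x)·e(d^{1/n}·x / M^{1 − 1/n} − n·d^{1/n}·x^{1/n})·x^{1/(2n) − 1/2} dx| ≥ c_1·Δ·M^{1/(2n) − 1/2}. -/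
open Complex Real MeasureTheory

/-!
Write `p = 1/n` and factor out `d^{1/n}`: the remaining phase `ψ(x) = x M^{p-1} - x^p / p` is
stationary at `x = M`, so `|ψ(x) - ψ(M)| ≤ M^{p-2} (x - M)^2 ≤ M^{p-2} Δ^2`, which is at most `c₀^2`
when `Δ ≤ c₀ M^{1-p/2}`. With the phase within `π/3` of its value at `M`, rotating the integral by
that value makes the real part of the integrand at least half the nonnegative weight
`w(x) x^{p/2-1/2}`, which integrates to `≫ Δ M^{p/2-1/2}` because `w = 1` on the middle half.
-/

section NonOscillation

variable {α : Type*} [MeasurableSpace α] {μ : Measure α}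

lemma re_exp_neg_mul_ofReal_mul_exp (θ₀ g θ : ℝ) :
    (exp ((-θ₀ : ℝ) * I) * ((g : ℂ) * exp (θ * I))).re = g * Real.cos (θ - θ₀) := by
  have h : exp ((-θ₀ : ℝ) * I) * ((g : ℂ) * exp (θ * I)) =
      g * exp (((θ - θ₀ : ℝ) : ℂ) * I) := by
    rw [mul_left_comm, ← Complex.exp_add]
    push_cast
    ring_nf
  rw [h, re_ofReal_mul, exp_ofReal_mul_I_re]

theorem cos_mul_integral_le_norm_integral_mul_exp {g θ : α → ℝ} {θ₀ δ : ℝ}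
    (hg : Integrable g μ) (hθ : AEStronglyMeasurable θ μ) (hg0 : ∀ᵐ x ∂μ, 0 ≤ g x)
    (hθδ : ∀ᵐ x ∂μ, |θ x - θ₀| ≤ δ) (hδ : δ ≤ π) :
    Real.cos δ * ∫ x, g x ∂μ ≤ ‖∫ x, (g x : ℂ) * exp (θ x * I) ∂μ‖ := by
  set u : ℂ := exp ((-θ₀ : ℝ) * I)
  have hF : Integrable (fun x ↦ (g x : ℂ) * exp (θ x * I)) μ :=
    hg.ofReal.mul_bdd (by fun_prop) (c := 1) (.of_forall fun x ↦ (norm_exp_ofReal_mul_I _).le)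
  have huF : Integrable (fun x ↦ g x * Real.cos (θ x - θ₀)) μ := by
    simpa only [RCLike.re_to_complex, u, re_exp_neg_mul_ofReal_mul_exp] using (hF.const_mul u).re
  have hcos : ∀ᵐ x ∂μ, Real.cos δ * g x ≤ g x * Real.cos (θ x - θ₀) := by
    filter_upwards [hg0, hθδ] with x hx0 hxδ
    rw [mul_comm, ← Real.cos_abs (θ x - θ₀)]
    exact mul_le_mul_of_nonneg_left (cos_le_cos_of_nonneg_of_le_pi (abs_nonneg _) hδ hxδ) hx0
  calc Real.cos δ * ∫ x, g x ∂μ = ∫ x, Real.cos δ * g x ∂μ := (integral_const_mul _ _).symm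
    _ ≤ ∫ x, g x * Real.cos (θ x - θ₀) ∂μ := integral_mono_ae (hg.const_mul _) huF hcos
    _ = (u * ∫ x, (g x : ℂ) * exp (θ x * I) ∂μ).re := by
      rw [← integral_const_mul, ← RCLike.re_to_complex, ← integral_re (hF.const_mul u)]
      simp only [RCLike.re_to_complex, u, re_exp_neg_mul_ofReal_mul_exp]
    _ ≤ ‖u * ∫ x, (g x : ℂ) * exp (θ x * I) ∂μ‖ := re_le_norm _
    _ = ‖∫ x, (g x : ℂ) * exp (θ x * I) ∂μ‖ := by
      rw [norm_mul, norm_exp_ofReal_mul_I, one_mul]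

end NonOscillation

section Phase

variable {p : ℝ}

/-- Bernoulli's inequality applied to `(1 + s)⁻¹ = 1 - s / (1 + s)`. -/
lemma one_add_mul_div_one_add_le_one_add_rpow {s : ℝ} (hs : 0 ≤ s) (hp0 : 0 ≤ p) (hp1 : p ≤ 1) :
    1 + p * (s / (1 + s)) ≤ (1 + s) ^ p := by
  set a := s / (1 + s)
  have ha : 0 ≤ a := by positivity
  have hbern : ((1 + s) ^ p)⁻¹ ≤ 1 - p * a := by
    have h := rpow_one_add_le_one_add_mul_self (s := -a)
      (by linarith [div_le_one_of_le₀ (by linarith : s ≤ 1 + s) (by positivity)]) hp0 hp1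
    rwa [show 1 + -a = (1 + s)⁻¹ by simp only [a]; field_simp; ring, inv_rpow (by positivity),
      mul_neg, ← sub_eq_add_neg] at h
  have hy1 : 1 ≤ (1 + s) ^ p := one_le_rpow (by linarith) hp0
  have hy : 1 ≤ (1 + s) ^ p * (1 - p * a) := by
    rwa [inv_le_iff_one_le_mul₀' (by positivity)] at hbern
  nlinarith [mul_nonneg hp0 ha]

lemma abs_sub_sub_one_add_rpow_div_le_sq {s : ℝ} (hs : 0 ≤ s) (hp0 : 0 < p) (hp1 : p ≤ 1) :
    |s - ((1 + s) ^ p - 1) / p| ≤ s ^ 2 := by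
  have hupper : (1 + s) ^ p ≤ 1 + p * s := rpow_one_add_le_one_add_mul_self (by linarith) hp0.le hp1
  have hlower := one_add_mul_div_one_add_le_one_add_rpow hs hp0.le hp1
  rw [abs_le]
  constructor
  · have : ((1 + s) ^ p - 1) / p ≤ s := by rw [div_le_iff₀ hp0]; linarith
    nlinarith [sq_nonneg s]
  · have h1 : s / (1 + s) ≤ ((1 + s) ^ p - 1) / p := by rw [le_div_iff₀ hp0]; linarith
    have h2 : s - s / (1 + s) ≤ s ^ 2 := by
      rw [show s - s / (1 + s) = s ^ 2 / (1 + s) by field_simp; ring]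
      exact div_le_self (sq_nonneg s) (by linarith)
    linarith

theorem abs_phase_sub_phase_le {M x : ℝ} (hp0 : 0 < p) (hp1 : p ≤ 1) (hM : 0 < M) (hMx : M ≤ x) :
    |(x / M ^ (1 - p) - x ^ p / p) - (M / M ^ (1 - p) - M ^ p / p)| ≤
      M ^ (p - 2) * (x - M) ^ 2 := by
  set s := x / M - 1
  have hs : 0 ≤ s := by rw [sub_nonneg, le_div_iff₀ hM]; linarith
  have hx : x = M * (1 + s) := by simp only [s]; field_simp; ring
  have hMp : 0 < M ^ p := rpow_pos_of_pos hM p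
  have hphase : (x / M ^ (1 - p) - x ^ p / p) - (M / M ^ (1 - p) - M ^ p / p) =
      M ^ p * (s - ((1 + s) ^ p - 1) / p) := by
    rw [hx, mul_rpow hM.le (by linarith), rpow_sub hM, rpow_one]
    field_simp
    ring
  have hbound : M ^ (p - 2) * (x - M) ^ 2 = M ^ p * s ^ 2 := by
    rw [hx, rpow_sub hM, rpow_two]
    field_simp
    ring
  rw [hphase, hbound, abs_mul, abs_of_pos hMp]
  exact mul_le_mul_of_nonneg_left (abs_sub_sub_one_add_rpow_div_le_sq hs hp0 hp1) hMp.le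

end Phase

section Scale

variable {c M Δ : ℝ}

lemma le_self_of_le_mul_rpow {q : ℝ} (hc : c ≤ 1) (hM : 1 ≤ M) (hq : 0 ≤ q)
    (hΔ : Δ ≤ c * M ^ (1 - q)) : Δ ≤ M := calc
  Δ ≤ c * M ^ (1 - q) := hΔ
  _ ≤ 1 * M ^ (1 : ℝ) :=
    mul_le_mul hc (rpow_le_rpow_of_exponent_le hM (by linarith)) (by positivity) zero_le_one
  _ = M := by rw [one_mul, rpow_one]

lemma rpow_sub_two_mul_sq_le_sq {p : ℝ} (hM : 0 < M) (hΔ : 0 ≤ Δ)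
    (hΔc : Δ ≤ c * M ^ (1 - p / 2)) : M ^ (p - 2) * Δ ^ 2 ≤ c ^ 2 := calc
  M ^ (p - 2) * Δ ^ 2 ≤ M ^ (p - 2) * (c * M ^ (1 - p / 2)) ^ 2 := by gcongr
  _ = c ^ 2 := by
    rw [mul_pow, ← rpow_mul_natCast hM.le, mul_left_comm, ← rpow_add hM]
    ring_nf
    rw [rpow_zero, mul_one]

end Scale

section Weight

variable {w : ℝ → ℝ} {a b M Δ β : ℝ}

lemma integrableOn_mul_rpow_Ioc (hw : Measurable w) (hw1 : ∀ x, |w x| ≤ 1) (ha : 0 < a) :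
    IntegrableOn (fun x ↦ w x * x ^ β) (Set.Ioc a b) := by
  have hrpow : IntegrableOn (fun x : ℝ ↦ x ^ β) (Set.Icc a b) :=
    ContinuousOn.integrableOn_Icc fun x hx ↦
      (continuousAt_rpow_const _ _ (Or.inl (ha.trans_le hx.1).ne')).continuousWithinAt
  exact (hrpow.mono_set Set.Ioc_subset_Icc_self).bdd_mul hw.aestronglyMeasurable (c := 1)
    (.of_forall fun x ↦ by simpa using hw1 x)

lemma mul_rpow_le_setIntegral_mul_rpow (hw : Measurable w) (hw0 : ∀ x, 0 ≤ w x)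
    (hw1 : ∀ x, w x ≤ 1) (hmid : ∀ x ∈ Set.Icc (M + Δ / 4) (M + 3 * Δ / 4), w x = 1)
    (hM : 0 < M) (hΔ : 0 < Δ) (hΔM : Δ ≤ M) (hβ0 : -1 ≤ β) (hβ1 : β ≤ 0) :
    Δ / 4 * M ^ β ≤ ∫ x in Set.Ioc M (M + Δ), w x * x ^ β := by
  have hint : IntegrableOn (fun x ↦ w x * x ^ β) (Set.Ioc M (M + Δ)) :=
    integrableOn_mul_rpow_Ioc hw (fun x ↦ abs_le.2 ⟨by linarith [hw0 x], hw1 x⟩) hM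
  have hsub : Set.Icc (M + Δ / 4) (M + 3 * Δ / 4) ⊆ Set.Ioc M (M + Δ) :=
    fun x hx ↦ ⟨by linarith [hx.1], by linarith [hx.2]⟩
  have hMΔ : M ^ β / 2 ≤ (M + Δ) ^ β := calc
    M ^ β / 2 = 2 ^ (-1 : ℝ) * M ^ β := by rw [rpow_neg_one]; ring
    _ ≤ 2 ^ β * M ^ β := by gcongr; norm_num
    _ = (2 * M) ^ β := (mul_rpow (by norm_num) hM.le).symm
    _ ≤ (M + Δ) ^ β := rpow_le_rpow_of_nonpos (by linarith) (by linarith) hβ1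
  calc Δ / 4 * M ^ β ≤ volume.real (Set.Icc (M + Δ / 4) (M + 3 * Δ / 4)) • (M + Δ) ^ β := by
        rw [volume_real_Icc_of_le (by linarith), smul_eq_mul]
        nlinarith
    _ ≤ ∫ x in Set.Icc (M + Δ / 4) (M + 3 * Δ / 4), w x * x ^ β :=
        setIntegral_ge_of_const_le measurableSet_Icc measure_Icc_lt_top.ne
          (fun x hx ↦ by
            rw [hmid x hx, one_mul]
            exact rpow_le_rpow_of_nonpos (by linarith [hx.1]) (by linarith [hx.2]) hβ1)
          (hint.mono_set hsub)
    _ ≤ ∫ x in Set.Ioc M (M + Δ), w x * x ^ β :=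
        setIntegral_mono_set hint
          (ae_restrict_of_forall_mem measurableSet_Ioc fun x hx ↦
            mul_nonneg (hw0 x) (rpow_nonneg (by linarith [hx.1]) _))
          (.of_forall hsub)

theorem div_eight_mul_rpow_le_norm_setIntegral_mul_exp {θ : ℝ → ℝ} (hw : Measurable w)
    (hw0 : ∀ x, 0 ≤ w x) (hw1 : ∀ x, w x ≤ 1)
    (hmid : ∀ x ∈ Set.Icc (M + Δ / 4) (M + 3 * Δ / 4), w x = 1)
    (hM : 0 < M) (hΔ : 0 < Δ) (hΔM : Δ ≤ M) (hβ0 : -1 ≤ β) (hβ1 : β ≤ 0) (hθ : Measurable θ)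
    (hphase : ∀ x ∈ Set.Ioc M (M + Δ), |θ x - θ M| ≤ π / 3) :
    Δ / 8 * M ^ β ≤ ‖∫ x in Set.Ioc M (M + Δ), ((w x * x ^ β : ℝ) : ℂ) * exp (θ x * I)‖ := by
  have h := cos_mul_integral_le_norm_integral_mul_exp (θ₀ := θ M)
    (integrableOn_mul_rpow_Ioc hw (fun x ↦ abs_le.2 ⟨by linarith [hw0 x], hw1 x⟩) hM)
    hθ.aestronglyMeasurable
    (ae_restrict_of_forall_mem measurableSet_Ioc fun x hx ↦
      mul_nonneg (hw0 x) (rpow_nonneg (hM.trans hx.1).le β))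
    (ae_restrict_of_forall_mem measurableSet_Ioc hphase) (by linarith [pi_pos])
  rw [cos_pi_div_three] at h
  linarith [mul_rpow_le_setIntegral_mul_rpow hw hw0 hw1 hmid hM hΔ hΔM hβ0 hβ1]

end Weight

theorem resonating_integral_lower_bound_general (n : ℕ) (hn : 2 ≤ n) (d : ℕ) :
    ∃ c₀ c₁ : ℝ, 0 < c₀ ∧ 0 < c₁ ∧
      ∀ M : ℝ, 1 ≤ M → ∀ Δ : ℝ, 0 < Δ → Δ ≤ c₀ * M ^ (1 - 1/(2*(n : ℝ))) →
      ∀ w : ℝ → ℝ, Measurable w → (∀ x, 0 ≤ w x) → (∀ x, w x ≤ 1) →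
        (∀ x, x ∉ Set.Icc M (M + Δ) → w x = 0) →
        (∀ x ∈ Set.Icc (M + Δ/4) (M + 3*Δ/4), w x = 1) →
        c₁ * Δ * M ^ (1/(2*(n : ℝ)) - 1/2) ≤
          ‖(∫ x in M..(M + Δ), ((w x : ℝ) : ℂ) *
            Complex.exp (2 * (Real.pi : ℂ) * Complex.I *
              (((d : ℝ) ^ (1/(n : ℝ)) * x / M ^ (1 - 1/(n : ℝ)) -
                (n : ℝ) * (d : ℝ) ^ (1/(n : ℝ)) * x ^ (1/(n : ℝ)) : ℝ) : ℂ)) *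
            ((x ^ (1/(2*(n : ℝ)) - 1/2) : ℝ) : ℂ))‖ := by
  have hn1 : (1 : ℝ) ≤ n := by exact_mod_cast (by omega : 1 ≤ n)
  set p : ℝ := 1 / (n : ℝ) with hp
  have hp0 : 0 < p := by positivity
  have hp1 : p ≤ 1 := div_le_one_of_le₀ hn1 (by positivity)
  set D : ℝ := (d : ℝ) ^ p
  have hD : 0 ≤ D := by positivity
  set c₀ : ℝ := 1 / (2 * (D + 1))
  have hc₀ : D * c₀ ^ 2 ≤ 1 / 16 := by
    rw [div_pow, one_pow, mul_one_div, div_le_div_iff₀ (by positivity) (by norm_num)]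
    nlinarith [sq_nonneg (D - 1)]
  refine ⟨c₀, 1 / 8, by positivity, by norm_num, ?_⟩
  intro M hM Δ hΔ hΔc w hw hw0 hw1 _ hmid
  have hM0 : 0 < M := by linarith
  rw [show 1 - 1 / (2 * (n : ℝ)) = 1 - p / 2 by rw [hp]; ring] at hΔc
  have hΔM : Δ ≤ M := le_self_of_le_mul_rpow (div_le_one_of_le₀ (by linarith) (by positivity))
    hM (by positivity) hΔc
  set θ : ℝ → ℝ := fun x ↦ 2 * π * (D * x / M ^ (1 - p) - n * D * x ^ p)
  have hphase : ∀ x ∈ Set.Ioc M (M + Δ), |θ x - θ M| ≤ π / 3 := by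
    intro x hx
    have hθ : θ x - θ M = 2 * π * D *
        ((x / M ^ (1 - p) - x ^ p / p) - (M / M ^ (1 - p) - M ^ p / p)) := by
      simp only [θ, hp]
      field_simp
    calc |θ x - θ M| ≤ 2 * π * (D * (M ^ (p - 2) * Δ ^ 2)) := by
          rw [hθ, abs_mul, abs_of_nonneg (by positivity), mul_assoc]
          gcongr
          exact (abs_phase_sub_phase_le hp0 hp1 hM0 hx.1.le).trans
            (by gcongr <;> linarith [hx.1, hx.2])
      _ ≤ 2 * π * (D * c₀ ^ 2) := by gcongr; exact rpow_sub_two_mul_sq_le_sq hM0 hΔ.le hΔc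
      _ ≤ π / 3 := by nlinarith [pi_pos]
  have hβ : 1 / (2 * (n : ℝ)) - 1 / 2 = p / 2 - 1 / 2 := by rw [hp]; ring
  rw [intervalIntegral.integral_of_le (by linarith)]
  calc 1 / 8 * Δ * M ^ (1 / (2 * (n : ℝ)) - 1 / 2)
      = Δ / 8 * M ^ (1 / (2 * (n : ℝ)) - 1 / 2) := by ring
    _ ≤ _ := div_eight_mul_rpow_le_norm_setIntegral_mul_exp hw hw0 hw1 hmid hM0 hΔ hΔM
          (by rw [hβ]; linarith) (by rw [hβ]; linarith) (by simp only [θ]; fun_prop) hphase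
    _ = _ := by
      congr 2
      ext x
      simp only [θ]
      push_cast
      ring_nf

/-- The resonating integral does not oscillate: for `Δ ≪ M^{1-1/(2n)}` and any weight `w`
that is `1` on the middle half of `[M, M+Δ]` and between `0` and `1` elsewhere,
`|∫_M^{M+Δ} w(x) e(d^{1/n} x / M^{1-1/n} - n d^{1/n} x^{1/n}) x^{1/(2n)-1/2} dx|
  ≫ Δ M^{1/(2n)-1/2}`. -/
theorem resonating_integral_lower_bound (n : ℕ) (hn : 2 ≤ n) (d : ℕ) (hd : 0 < d) :
    ∃ c₀ c₁ : ℝ, 0 < c₀ ∧ 0 < c₁ ∧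
      ∀ M : ℝ, 1 ≤ M → ∀ Δ : ℝ, 0 < Δ → Δ ≤ c₀ * M ^ (1 - 1/(2*(n : ℝ))) →
      ∀ w : ℝ → ℝ, Measurable w → (∀ x, 0 ≤ w x) → (∀ x, w x ≤ 1) →
        (∀ x, x ∉ Set.Icc M (M + Δ) → w x = 0) →
        (∀ x ∈ Set.Icc (M + Δ/4) (M + 3*Δ/4), w x = 1) →
        c₁ * Δ * M ^ (1/(2*(n : ℝ)) - 1/2) ≤
          ‖(∫ x in M..(M + Δ), ((w x : ℝ) : ℂ) *
            Complex.exp (2 * (Real.pi : ℂ) * Complex.I *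
              (((d : ℝ) ^ (1/(n : ℝ)) * x / M ^ (1 - 1/(n : ℝ)) -
                (n : ℝ) * (d : ℝ) ^ (1/(n : ℝ)) * x ^ (1/(n : ℝ)) : ℝ) : ℂ)) *
            ((x ^ (1/(2*(n : ℝ)) - 1/2) : ℝ) : ℂ))‖ :=
  resonating_integral_lower_bound_general n hn d
end

section
/- Let a : ℤ → ℂ, let α ∈ ℝ, and let M, U, Δ be positive integers with Δ ≤ U. Set A = max{|a(m)| : M ≤ m ≤ M + U + Δ − 1}, S_1 = Σ_{h=0}^{Δ−1} e(αh), and S_2 = Σ_{m=M}^{M+U} a(m)·e(αm). Then there exists an integer t with M ≤ t ≤ M + U − Δ + 1 such that |Σ_{m=t}^{t+Δ−1} a(m)| ≥ (|S_1|·|S_2| − 2·Δ^2·A) / (U + 1). -/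
/-!
Expanding `S₁ S₂` and substituting `n = m + h` writes it as `∑ₙ (∑_{h<Δ} a(n-h)) e(αn)`,
up to the terms with `n` outside `[M+Δ-1, M+U]`; for each `h` there are fewer than `Δ` of
them, each of size at most `A`. For `n` inside that range the inner sum is the short sum
of `a` over the window `[n-Δ+1, n]`, so by the triangle inequality `|S₁| |S₂|` is at most
the sum of the `U - Δ + 2 ≤ U + 1` window sums plus `Δ²A`, and the largest window sum is
at least the average.
-/

open Finset Real FourierTransform

lemma Real.coe_fourierChar_eq_exp (x : ℝ) :
    (𝐞 x : ℂ) = Complex.exp (2 * π * Complex.I * x) := by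
  rw [Real.fourierChar_apply]
  push_cast
  ring_nf

namespace Finset

lemma sum_Icc_eq_sum_Icc_add_sub {β : Type*} [AddCommMonoid β] (f : ℤ → β) (a b c : ℤ) :
    ∑ m ∈ Icc a b, f m = ∑ n ∈ Icc (a + c) (b + c), f (n - c) := by
  rw [← map_add_right_Icc, sum_map]
  simp

lemma sum_range_sub_eq_sum_Icc {β : Type*} [AddCommMonoid β] (f : ℤ → β) (n : ℤ) (Δ : ℕ) :
    ∑ h ∈ range Δ, f (n - h) = ∑ m ∈ Icc (n - Δ + 1) n, f m := by
  apply sum_nbij' (fun h : ℕ => n - h) (fun m : ℤ => (n - m).toNat) <;> intros <;> simp_all; omega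

lemma norm_sum_sub_sum_le_of_subset {ι E : Type*} [SeminormedAddCommGroup E] [DecidableEq ι]
    {s t : Finset ι} (hts : t ⊆ s) {f : ι → E} {B : ℝ} (hf : ∀ x ∈ s \ t, ‖f x‖ ≤ B) :
    ‖∑ x ∈ s, f x - ∑ x ∈ t, f x‖ ≤ #(s \ t) * B := by
  rw [← sum_sdiff hts, add_sub_cancel_right]
  simpa using norm_sum_le_of_le _ hf

end Finset

section Resonance

variable (a : ℤ → ℂ) (χ : AddChar ℤ Circle) (M U : ℤ) (Δ : ℕ) {A : ℝ}

lemma norm_sum_range_mul_sum_Icc_sub_sum_windows_le (hA0 : 0 ≤ A)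
    (hA : ∀ m ∈ Icc M (M + U), ‖a m‖ ≤ A) :
    ‖(∑ h ∈ range Δ, (χ h : ℂ)) * (∑ m ∈ Icc M (M + U), a m * χ m) -
        ∑ n ∈ Icc (M + Δ - 1) (M + U), (∑ m ∈ Icc (n - Δ + 1) n, a m) * χ n‖ ≤
      Δ ^ 2 * A := by
  have hprod : (∑ h ∈ range Δ, (χ h : ℂ)) * (∑ m ∈ Icc M (M + U), a m * χ m) =
      ∑ h ∈ range Δ, ∑ n ∈ Icc (M + h) (M + U + h), a (n - h) * χ n := by
    rw [sum_mul]
    refine sum_congr rfl fun h _ => ?_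
    rw [mul_sum, sum_Icc_eq_sum_Icc_add_sub _ _ _ h]
    refine sum_congr rfl fun n _ => ?_
    rw [mul_left_comm, ← Circle.coe_mul, ← AddChar.map_add_eq_mul, add_sub_cancel]
  have hwindows : ∑ n ∈ Icc (M + Δ - 1) (M + U), (∑ m ∈ Icc (n - Δ + 1) n, a m) * χ n =
      ∑ h ∈ range Δ, ∑ n ∈ Icc (M + Δ - 1) (M + U), a (n - h) * χ n := by
    simp_rw [← sum_range_sub_eq_sum_Icc, sum_mul]
    exact sum_comm
  rw [hprod, hwindows, ← sum_sub_distrib]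
  calc _ ≤ ∑ _h ∈ range Δ, (Δ * A : ℝ) := norm_sum_le_of_le _ fun h hh => ?_
    _ = Δ ^ 2 * A := by simp [sq, mul_assoc]
  rw [mem_range] at hh
  have hsub : Icc (M + Δ - 1) (M + U) ⊆ Icc (M + h) (M + U + h) :=
    Icc_subset_Icc (by omega) (by omega)
  calc _ ≤ #(Icc (M + h) (M + U + h) \ Icc (M + Δ - 1) (M + U)) * A :=
        norm_sum_sub_sum_le_of_subset hsub fun n hn => by
          rw [mem_sdiff, mem_Icc] at hn
          rw [norm_mul, Circle.norm_coe, mul_one]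
          exact hA _ (mem_Icc.2 (by omega))
    _ ≤ Δ * A := by
      gcongr
      rw [card_sdiff_of_subset hsub, Int.card_Icc, Int.card_Icc]
      omega

lemma norm_sum_range_mul_norm_sum_Icc_le (hA0 : 0 ≤ A) (hA : ∀ m ∈ Icc M (M + U), ‖a m‖ ≤ A) :
    ‖∑ h ∈ range Δ, (χ h : ℂ)‖ * ‖∑ m ∈ Icc M (M + U), a m * χ m‖ ≤
      ∑ t ∈ Icc M (M + U - Δ + 1), ‖∑ m ∈ Icc t (t + Δ - 1), a m‖ + Δ ^ 2 * A := by
  have hreindex : ∑ t ∈ Icc M (M + U - Δ + 1), ‖∑ m ∈ Icc t (t + Δ - 1), a m‖ =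
      ∑ n ∈ Icc (M + Δ - 1) (M + U), ‖∑ m ∈ Icc (n - Δ + 1) n, a m‖ := by
    rw [sum_Icc_eq_sum_Icc_add_sub _ _ _ (Δ - 1)]
    ring_nf
  rw [← norm_mul, hreindex]
  refine (norm_le_norm_add_norm_sub' _ _).trans (add_le_add ?_
    (norm_sum_range_mul_sum_Icc_sub_sum_windows_le a χ M U Δ hA0 hA))
  exact norm_sum_le_of_le _ fun n _ => by rw [norm_mul, Circle.norm_coe, mul_one]

end Resonance

theorem short_sum_from_resonance_general (a : ℤ → ℂ) (α : ℝ) (M U Δ : ℤ)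
    (hΔ : 0 < Δ) (hΔU : Δ ≤ U) (A : ℝ)
    (hA : IsGreatest ((fun m => ‖a m‖) '' Set.Icc M (M + U + Δ - 1)) A) :
    ∃ t : ℤ, M ≤ t ∧ t ≤ M + U - Δ + 1 ∧
      (‖∑ h ∈ Finset.range Δ.toNat,
            Complex.exp (2 * (Real.pi : ℂ) * Complex.I * ((α * (h : ℝ) : ℝ) : ℂ))‖ *
          ‖∑ m ∈ Finset.Icc M (M + U),
            a m * Complex.exp (2 * (Real.pi : ℂ) * Complex.I * ((α * (m : ℝ) : ℝ) : ℂ))‖ -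
          2 * (Δ : ℝ) ^ 2 * A) / ((U : ℝ) + 1) ≤
        ‖∑ m ∈ Finset.Icc t (t + Δ - 1), a m‖ := by
  lift Δ to ℕ using hΔ.le
  obtain ⟨⟨m₀, -, hm₀⟩, hAmax⟩ := hA
  have hA0 : 0 ≤ A := hm₀ ▸ norm_nonneg _
  have hAle : ∀ m ∈ Icc M (M + U), ‖a m‖ ≤ A := fun m hm =>
    hAmax ⟨m, by rw [mem_Icc] at hm; exact ⟨hm.1, by omega⟩, rfl⟩
  let χ : AddChar ℤ Circle :=
    𝐞.compAddMonoidHom ((AddMonoidHom.mulLeft α).comp (Int.castAddHom ℝ))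
  have hχ (n : ℤ) : (χ n : ℂ) = Complex.exp (2 * π * Complex.I * ↑(α * n)) :=
    Real.coe_fourierChar_eq_exp _
  have hbound := norm_sum_range_mul_norm_sum_Icc_le a χ M U Δ hA0 hAle
  simp only [hχ, Int.cast_natCast] at hbound
  obtain ⟨t, ht, htmax⟩ := exists_max_image (Icc M (M + U - Δ + 1))
    (fun t => ‖∑ m ∈ Icc t (t + Δ - 1), a m‖) (nonempty_Icc.2 (by omega))
  refine ⟨t, (mem_Icc.1 ht).1, (mem_Icc.1 ht).2, ?_⟩
  have hUpos : (0 : ℝ) < U + 1 := by exact_mod_cast (show (0 : ℤ) < U + 1 by omega)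
  have haverage : ∑ t' ∈ Icc M (M + U - Δ + 1), ‖∑ m ∈ Icc t' (t' + Δ - 1), a m‖ ≤
      (U + 1) * ‖∑ m ∈ Icc t (t + Δ - 1), a m‖ := by
    refine (sum_le_card_nsmul _ _ _ htmax).trans ?_
    rw [nsmul_eq_mul]
    gcongr
    rw [Int.card_Icc]
    exact_mod_cast (show ((M + U - Δ + 1 + 1 - M).toNat : ℤ) ≤ U + 1 by omega)
  rw [Int.toNat_natCast, Int.cast_natCast, div_le_iff₀ hUpos]
  linarith [mul_nonneg (sq_nonneg (Δ : ℝ)) hA0]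

/-- The combinatorial core of the Ω-result: multiplying a long twisted sum `S₂` by a
geometric sum `S₁` of length `Δ` and rearranging produces many short untwisted sums of
length `Δ`, one of which must have size at least `(|S₁||S₂| - 2Δ²A)/(U+1)`, where `A` is
the maximum of `|a(m)|` over the relevant range. -/
theorem short_sum_from_resonance (a : ℤ → ℂ) (α : ℝ) (M U Δ : ℤ)
    (hM : 0 < M) (hU : 0 < U) (hΔ : 0 < Δ) (hΔU : Δ ≤ U) (A : ℝ)
    (hA : IsGreatest ((fun m => ‖a m‖) '' Set.Icc M (M + U + Δ - 1)) A) :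
    ∃ t : ℤ, M ≤ t ∧ t ≤ M + U - Δ + 1 ∧
      (‖∑ h ∈ Finset.range Δ.toNat,
            Complex.exp (2 * (Real.pi : ℂ) * Complex.I * ((α * (h : ℝ) : ℝ) : ℂ))‖ *
          ‖∑ m ∈ Finset.Icc M (M + U),
            a m * Complex.exp (2 * (Real.pi : ℂ) * Complex.I * ((α * (m : ℝ) : ℝ) : ℂ))‖ -
          2 * (Δ : ℝ) ^ 2 * A) / ((U : ℝ) + 1) ≤
        ‖∑ m ∈ Finset.Icc t (t + Δ - 1), a m‖ :=
  short_sum_from_resonance_general a α M U Δ hΔ hΔU A hA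
end

section
/- There exists a constant C > 0 such that for every positive integer N and every real number t with |t| ≥ 1, one has |Γ(1/2 − N + it)| ≤ C·e^{−π|t|/2} / (N − 1)!. -/
open Complex Real

open scoped ComplexConjugate Nat

/-! Writing `z = 1/2 - N + it`, the functional equation gives `Γ(1/2 + it) = Γ(z) ∏_{j<N} (z + j)`.
On the critical line the reflection formula `Γ(s) Γ(1 - s) = π / sin(πs)` with `1 - s = s̄` yields
`|Γ(1/2 + it)|² = π / cosh(πt) ≤ 2π e^{-π|t|}`, while `|z + j| ≥ N - j - 1/2` for `j < N - 1` and
`|z + N - 1| ≥ |t| ≥ 1`, so the product is at least `(N - 1)!`. -/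

open Finset in
theorem Complex.Gamma_add_nat_eq_prod_mul_Gamma (s : ℂ) (hs : ∀ k : ℕ, s ≠ -k) (N : ℕ) :
    Gamma (s + N) = (∏ j ∈ range N, (s + j)) * Gamma s := by
  induction N with
  | zero => simp
  | succ n ih =>
    have hsn : s + n ≠ 0 := fun h ↦ hs n (eq_neg_of_add_eq_zero_left h)
    rw [Nat.cast_succ, ← add_assoc, Gamma_add_one _ hsn, ih, prod_range_succ]
    ring

theorem Real.exp_abs_le_two_mul_cosh (x : ℝ) : exp |x| ≤ 2 * cosh x := by
  rw [← cosh_abs, cosh_eq]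
  linarith [exp_pos (-|x|)]

theorem Complex.norm_Gamma_one_half_add_mul_I_sq (t : ℝ) :
    ‖Gamma (1 / 2 + t * I)‖ ^ 2 = π / Real.cosh (π * t) := by
  set s : ℂ := 1 / 2 + t * I
  have h_reflect : 1 - s = conj s := by
    apply Complex.ext <;> simp [s]
    norm_num
  have h_sin : sin (π * s) = Real.cosh (π * t) := by
    rw [show (π : ℂ) * s = (π * t : ℝ) * I + π / 2 by push_cast [s]; ring,
      sin_add_pi_div_two, cos_mul_I, ofReal_cosh]
  have h := Gamma_mul_Gamma_one_sub s
  rw [h_reflect, Gamma_conj, mul_conj', h_sin, ← ofReal_pow, ← ofReal_div] at h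
  exact ofReal_injective h

theorem Complex.norm_Gamma_one_half_add_mul_I_le (t : ℝ) :
    ‖Gamma (1 / 2 + t * I)‖ ≤ √(2 * π) * Real.exp (-π * |t| / 2) := by
  have h_sq : √(2 * π) ^ 2 * Real.exp (-π * |t| / 2) ^ 2 = π / (Real.exp |π * t| / 2) := by
    rw [sq_sqrt (by positivity), ← Real.exp_nat_mul, abs_mul, abs_of_pos pi_pos,
      show ((2 : ℕ) : ℝ) * (-π * |t| / 2) = -(π * |t|) by push_cast; ring, Real.exp_neg]
    field_simp
  rw [← sq_le_sq₀ (norm_nonneg _) (by positivity), mul_pow, h_sq,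
    norm_Gamma_one_half_add_mul_I_sq]
  gcongr
  linarith [exp_abs_le_two_mul_cosh (π * t)]

open Finset in
theorem Complex.factorial_le_prod_norm_add_nat (n : ℕ) (z : ℂ) (him : 1 ≤ |z.im|)
    (hre : z.re + n ≤ 0) :
    (n ! : ℝ) ≤ ∏ j ∈ range (n + 1), ‖z + j‖ := by
  induction n generalizing z with
  | zero => simpa using him.trans (abs_im_le_norm z)
  | succ n ih =>
    have h_head : (n + 1 : ℝ) ≤ ‖z‖ := by
      push_cast at hre
      linarith [neg_re z ▸ (re_le_norm (-z)), norm_neg z]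
    have h_tail := ih (z + 1) (by simpa using him) (by push_cast at hre ⊢; simp; linarith)
    rw [prod_range_succ', Nat.factorial_succ, Nat.cast_mul, Nat.cast_zero, add_zero, mul_comm]
    have h_shift (j : ℕ) : z + ((j + 1 : ℕ) : ℂ) = z + 1 + j := by push_cast; ring
    simp only [h_shift]
    gcongr
    exact_mod_cast h_head

/-- Gamma decay on shifted lines: `|Γ(1/2 - N + it)| ≤ C e^{-π|t|/2} / (N-1)!`
uniformly in `N ≥ 1` and `|t| ≥ 1`. -/
theorem gamma_shifted_line_bound :
    ∃ C : ℝ, 0 < C ∧ ∀ N : ℕ, 0 < N → ∀ t : ℝ, 1 ≤ |t| →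
      ‖Complex.Gamma (1/2 - (N : ℂ) + (t : ℂ) * Complex.I)‖ ≤
        C * Real.exp (-Real.pi * |t| / 2) / (Nat.factorial (N - 1) : ℝ) := by
  refine ⟨√(2 * π), by positivity, fun N hN t ht ↦ ?_⟩
  obtain ⟨n, rfl⟩ : ∃ n, N = n + 1 := ⟨N - 1, by omega⟩
  set z : ℂ := 1 / 2 - ((n + 1 : ℕ) : ℂ) + t * I
  have ht0 : t ≠ 0 := by rintro rfl; norm_num at ht
  have hz : ∀ k : ℕ, z ≠ -k := fun k hk ↦ ht0 (by simpa [z] using congrArg im hk)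
  have h_shift : z + ((n + 1 : ℕ) : ℂ) = 1 / 2 + t * I := by ring
  have h_prod := factorial_le_prod_norm_add_nat n z (by simpa [z] using ht)
    (by simp [z]; linarith)
  have h_rec := h_shift ▸ Gamma_add_nat_eq_prod_mul_Gamma z hz (n + 1)
  rw [Nat.add_sub_cancel]
  have h_prod_pos : 0 < ∏ j ∈ Finset.range (n + 1), ‖z + j‖ :=
    (Nat.cast_pos.mpr n.factorial_pos).trans_le h_prod
  calc ‖Gamma z‖ = ‖Gamma (1 / 2 + t * I)‖ / ∏ j ∈ Finset.range (n + 1), ‖z + j‖ := by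
        rw [h_rec, norm_mul, norm_prod, mul_div_cancel_left₀ _ h_prod_pos.ne']
    _ ≤ √(2 * π) * Real.exp (-π * |t| / 2) / n ! := by
        gcongr
        exact norm_Gamma_one_half_add_mul_I_le t
end
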